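/- arXiv:1609.05169 — 4 statements merged into one kernel-verified Lean document; each statement's English description precedes it below -/
import Mathlib

section
/- For any ρ > -1 and β ∈ ℝ, the power series W(z; ρ, β) = Σ_{k=0}^∞ z^k/(k! Γ(ρk + β)) has infinite radius of convergence, i.e., the Wright function is entire. -/
/-!
The terms are `z^k / k! · 1/Γ(ρk+β)`, so it suffices to show `|1/Γ(ρk+β)| ≤ C (k!)^a` eventually
for some `a < 1`; then the ratio test applies to `|z|^k (k!)^(a-1)`. For `ρ ≥ 0` one may take
`a = 0`, since `Γ(ρk+β)` is eventually `≥ 1` (or constant). For `-1 < ρ < 0` the reflection formula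
gives `|1/Γ(x)| ≤ Γ(1-x)/π`, and log-convexity of `Γ`, interpolating between `k+1` and a fixed
point, gives `Γ(-ρk + 1 - β) ≤ C Γ(k+1)^(-ρ) = C (k!)^(-ρ)` with `-ρ < 1`.
-/

open Real Filter Topology Nat

theorem summable_pow_mul_factorial_rpow (r : ℝ) {a : ℝ} (ha : a < 1) :
    Summable fun k : ℕ => r ^ k * (k ! : ℝ) ^ (a - 1) := by
  have hstep (n : ℕ) : r ^ (n + 1) * ((n + 1)! : ℝ) ^ (a - 1)
      = r * ((n : ℝ) + 1) ^ (a - 1) * (r ^ n * (n ! : ℝ) ^ (a - 1)) := by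
    rw [Nat.factorial_succ, Nat.cast_mul, Nat.cast_succ,
      Real.mul_rpow (by positivity) (by positivity), pow_succ]
    ring
  have hratio : Tendsto (fun n : ℕ => |r| * ((n : ℝ) + 1) ^ (a - 1)) atTop (𝓝 0) := by
    have h := (tendsto_rpow_neg_atTop (by linarith : 0 < 1 - a)).comp
      (tendsto_atTop_add_const_right _ 1 tendsto_natCast_atTop_atTop)
    simpa [Function.comp_def] using h.const_mul |r|
  refine summable_of_ratio_norm_eventually_le one_half_lt_one ?_
  filter_upwards [hratio.eventually (ge_mem_nhds one_half_pos)] with n hn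
  rw [hstep, norm_mul, norm_mul, Real.norm_eq_abs r,
    Real.norm_of_nonneg (by positivity : (0 : ℝ) ≤ ((n : ℝ) + 1) ^ (a - 1))]
  gcongr

theorem Real.inv_abs_Gamma_le_Gamma_one_sub_div_pi {x : ℝ} (hx : x < 1) :
    |Gamma x|⁻¹ ≤ Gamma (1 - x) / π := by
  have hΓ₁ : 0 < Gamma (1 - x) := Gamma_pos_of_pos (by linarith)
  rcases eq_or_ne (Gamma x) 0 with h | h
  · rw [h, abs_zero, inv_zero]
    positivity
  have hsin : sin (π * x) ≠ 0 := by
    intro hsin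
    have := Gamma_mul_Gamma_one_sub x
    rw [hsin, div_zero] at this
    exact mul_ne_zero h hΓ₁.ne' this
  have hrefl : |Gamma x| * Gamma (1 - x) = π / |sin (π * x)| := by
    simpa [abs_mul, abs_div, abs_of_pos hΓ₁, abs_of_pos pi_pos] using
      congrArg abs (Gamma_mul_Gamma_one_sub x)
  have hπ : π ≤ |Gamma x| * Gamma (1 - x) := by
    rw [hrefl, le_div_iff₀ (abs_pos.mpr hsin)]
    nlinarith [pi_pos, abs_sin_le_one (π * x)]
  rw [le_div_iff₀ pi_pos, inv_mul_eq_div, div_le_iff₀ (abs_pos.mpr h)]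
  linarith

theorem Real.exists_Gamma_mul_add_le_factorial_rpow {a : ℝ} (ha₀ : 0 < a) (ha₁ : a < 1) (c : ℝ) :
    ∃ C, ∀ᶠ k : ℕ in atTop, Gamma (a * k + c) ≤ C * (k ! : ℝ) ^ a := by
  set v := max 1 ((c - a) / (1 - a))
  have hv : 0 < v := lt_max_of_lt_left one_pos
  have hcv : c - a ≤ (1 - a) * v := by
    rw [← div_le_iff₀' (by linarith)]
    exact le_max_right _ _
  refine ⟨Gamma v ^ (1 - a), ?_⟩
  have hlarge : Tendsto (fun k : ℕ => a * k + c) atTop atTop :=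
    tendsto_atTop_add_const_right _ c (tendsto_natCast_atTop_atTop.const_mul_atTop ha₀)
  filter_upwards [hlarge.eventually_ge_atTop 2] with k hk
  calc Gamma (a * k + c) ≤ Gamma (a * ((k : ℝ) + 1) + (1 - a) * v) :=
        Gamma_strictMonoOn_Ici.monotoneOn hk (by simp only [Set.mem_Ici]; linarith) (by linarith)
    _ ≤ Gamma ((k : ℝ) + 1) ^ a * Gamma v ^ (1 - a) :=
        Gamma_mul_add_mul_le_rpow_Gamma_mul_rpow_Gamma (by positivity) hv ha₀ (by linarith)
          (by ring)
    _ = Gamma v ^ (1 - a) * (k ! : ℝ) ^ a := by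
        rw [Gamma_nat_eq_factorial, mul_comm]

theorem Real.eventually_inv_abs_Gamma_mul_add_le_one {ρ : ℝ} (hρ : 0 < ρ) (β : ℝ) :
    ∀ᶠ k : ℕ in atTop, |Gamma (ρ * k + β)|⁻¹ ≤ 1 := by
  have hlarge : Tendsto (fun k : ℕ => ρ * k + β) atTop atTop :=
    tendsto_atTop_add_const_right _ β (tendsto_natCast_atTop_atTop.const_mul_atTop hρ)
  filter_upwards [hlarge.eventually_ge_atTop 2] with k hk
  have hΓ : 1 ≤ Gamma (ρ * k + β) := by
    simpa [Gamma_two] using Gamma_strictMonoOn_Ici.monotoneOn (le_refl (2 : ℝ)) hk hk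
  rw [abs_of_pos (by linarith)]
  exact inv_le_one_of_one_le₀ hΓ

theorem Real.exists_inv_abs_Gamma_mul_add_le_factorial_rpow {ρ : ℝ} (hρ : -1 < ρ) (β : ℝ) :
    ∃ a < (1 : ℝ), ∃ C, ∀ᶠ k : ℕ in atTop, |Gamma (ρ * k + β)|⁻¹ ≤ C * (k ! : ℝ) ^ a := by
  rcases lt_trichotomy ρ 0 with hneg | rfl | hpos
  · obtain ⟨C, hC⟩ := exists_Gamma_mul_add_le_factorial_rpow (neg_pos.mpr hneg)
      (by linarith) (1 - β)
    have hsmall : Tendsto (fun k : ℕ => ρ * k + β) atTop atBot :=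
      tendsto_atBot_add_const_right _ β
        (tendsto_natCast_atTop_atTop.const_mul_atTop_of_neg hneg)
    refine ⟨-ρ, by linarith, C / π, ?_⟩
    filter_upwards [hC, hsmall.eventually_lt_atBot 1] with k hk hk₁
    calc |Gamma (ρ * k + β)|⁻¹ ≤ Gamma (1 - (ρ * k + β)) / π :=
          inv_abs_Gamma_le_Gamma_one_sub_div_pi hk₁
      _ ≤ C * (k ! : ℝ) ^ (-ρ) / π := by
          rw [show 1 - (ρ * k + β) = -ρ * k + (1 - β) by ring]
          gcongr
      _ = C / π * (k ! : ℝ) ^ (-ρ) := by ring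
  · exact ⟨0, one_pos, |Gamma β|⁻¹, .of_forall fun k => by simp⟩
  · exact ⟨0, one_pos, 1, by simpa using eventually_inv_abs_Gamma_mul_add_le_one hpos β⟩

/-- The Wright function series `Σ z^k/(k! Γ(ρk+β))` converges for every `z ∈ ℂ`
when `ρ > -1`, i.e. it has infinite radius of convergence (the Wright function
is entire). Here `1/Γ` vanishes at the non-positive integers (in Lean, division
by `0` is `0`, matching the convention). -/
theorem wright_series_entire (ρ β : ℝ) (hρ : -1 < ρ) :
    ∀ z : ℂ, Summable (fun k : ℕ =>
      z ^ k / ((k.factorial : ℂ) * Complex.Gamma ((ρ * k + β : ℝ) : ℂ))) := by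
  intro z
  obtain ⟨a, ha, C, hC⟩ := exists_inv_abs_Gamma_mul_add_le_factorial_rpow hρ β
  refine .of_norm_bounded_eventually_nat ((summable_pow_mul_factorial_rpow ‖z‖ ha).mul_left C) ?_
  filter_upwards [hC] with k hk
  have hk! : (0 : ℝ) < k ! := by positivity
  calc ‖z ^ k / ((k ! : ℂ) * Complex.Gamma ((ρ * k + β : ℝ) : ℂ))‖
      = ‖z‖ ^ k * (k ! : ℝ)⁻¹ * |Gamma (ρ * k + β)|⁻¹ := by
        rw [norm_div, norm_mul, norm_pow, Complex.Gamma_ofReal, Complex.norm_real,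
          Complex.norm_natCast, Real.norm_eq_abs, div_eq_mul_inv, mul_inv, mul_assoc]
    _ ≤ ‖z‖ ^ k * (k ! : ℝ)⁻¹ * (C * (k ! : ℝ) ^ a) := by gcongr
    _ = C * (‖z‖ ^ k * (k ! : ℝ) ^ (a - 1)) := by
        rw [Real.rpow_sub_one hk!.ne']
        ring
end

section
/- The derivative of the Wright function with respect to z satisfies ∂/∂z W(z, ρ, β) = W(z, ρ, ρ + β) for all z ∈ ℝ, ρ > -1, β ∈ ℝ. -/
/-- The Wright function `W(z; ρ; β) = Σ_{k≥0} z^k/(k! Γ(ρk+β))`. -/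
noncomputable def wright (z ρ β : ℝ) : ℝ :=
  ∑' k : ℕ, z ^ k / (k.factorial * Real.Gamma (ρ * k + β))

/-!
The Wright series is a power series with coefficients `c_k = 1 / (k! Γ(ρk + β))` that decay
faster than any geometric sequence, so it may be differentiated term by term, and shifting the
index turns `(k + 1) c_{k+1}` into the `k`-th coefficient of `W(·; ρ; ρ + β)`. For `ρ ≥ 0` the
factor `1 / Γ(ρk + β)` is eventually bounded. For `-1 < ρ < 0` the reflection formula bounds it
by `Γ(1 - ρk - β) ≤ n!` with `n = ⌊1 - ρk - β⌋`, and `n! (k - n)! ≤ k!` leaves `c_k ≤ 1 / (k - n)!`,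
where `k - n ≥ (1 + ρ) k - (1 - β)` grows linearly because `ρ > -1`.
-/

open Filter Nat Real

theorem hasDerivAt_tsum_mul_pow {𝕜 : Type*} [RCLike 𝕜] {a : ℕ → 𝕜}
    (ha : ∀ r : ℝ, 0 ≤ r → Summable fun k => ‖a k‖ * r ^ k) (z : 𝕜) :
    HasDerivAt (fun w => ∑' k, a k * w ^ k) (∑' k, (k + 1) * a (k + 1) * z ^ k) z := by
  set R := ‖z‖ + 1
  have hR : 1 ≤ R := by simp [R]
  have hbound : ∀ k, ∀ y ∈ Metric.ball z 1,
      ‖a k * (k * y ^ (k - 1))‖ ≤ ‖a k‖ * (2 * R) ^ k := by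
    intro k y hy
    have hyR : ‖y‖ ≤ R := by
      have := norm_le_norm_add_norm_sub' y z
      rw [Metric.mem_ball, dist_eq_norm] at hy
      simp only [R]; linarith
    rw [norm_mul, norm_mul, norm_pow, RCLike.norm_natCast]
    gcongr
    calc (k : ℝ) * ‖y‖ ^ (k - 1) ≤ 2 ^ k * R ^ k := by
          gcongr
          · exact_mod_cast (Nat.lt_two_pow_self).le
          · exact (pow_le_pow_left₀ (norm_nonneg y) hyR _).trans
              (pow_le_pow_right₀ hR (k.sub_le 1))
      _ = (2 * R) ^ k := (mul_pow 2 R k).symm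
  have hsum_z : Summable fun k => a k * z ^ k :=
    .of_norm_bounded (ha ‖z‖ (norm_nonneg z)) fun k => by rw [norm_mul, norm_pow]
  have hsum_deriv : Summable fun k => a k * (k * z ^ (k - 1)) :=
    .of_norm_bounded (ha (2 * R) (by positivity)) fun k =>
      hbound k z (Metric.mem_ball_self one_pos)
  have hderiv := hasDerivAt_tsum_of_isPreconnected (ha (2 * R) (by positivity)) Metric.isOpen_ball
    (convex_ball z 1).isPreconnected (fun k y _ => (hasDerivAt_pow k y).const_mul (a k)) hbound
    (Metric.mem_ball_self one_pos) hsum_z (Metric.mem_ball_self one_pos)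
  refine hderiv.congr_deriv ?_
  rw [hsum_deriv.tsum_eq_zero_add]
  simp only [CharP.cast_eq_zero, zero_mul, mul_zero, zero_add, Nat.cast_add, Nat.cast_one,
    add_tsub_cancel_right]
  congr! 2 with k
  ring

theorem Real.inv_abs_Gamma_le_Gamma_one_sub {x : ℝ} (hx : x < 1) :
    |Gamma x|⁻¹ ≤ Gamma (1 - x) := by
  have hpos : 0 < Gamma (1 - x) := Gamma_pos_of_pos (by linarith)
  rcases eq_or_ne (Gamma x) 0 with h0 | h0
  · simpa [h0] using hpos.le
  -- The reflection formula gives `|Γ x| Γ(1 - x) = π / |sin (π x)| ≥ π > 1`.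
  have hrefl : |Gamma x| * Gamma (1 - x) = π / |sin (π * x)| := by
    rw [← abs_of_pos hpos, ← abs_mul, Gamma_mul_Gamma_one_sub, abs_div, abs_of_pos pi_pos]
  have hsin : 0 < |sin (π * x)| := by
    refine abs_pos.mpr fun hs => ?_
    rw [hs, abs_zero, div_zero] at hrefl
    exact (mul_pos (abs_pos.mpr h0) hpos).ne' hrefl
  have hone : 1 ≤ |Gamma x| * Gamma (1 - x) := by
    rw [hrefl, le_div_iff₀ hsin, one_mul]
    linarith [abs_sin_le_one (π * x), pi_gt_three]
  rwa [inv_le_iff_one_le_mul₀ (abs_pos.mpr h0), mul_comm]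

theorem Real.Gamma_le_factorial_floor {x : ℝ} (hx : 2 ≤ x) : Gamma x ≤ (⌊x⌋₊)! := by
  rw [← Gamma_nat_eq_factorial]
  exact Gamma_strictMonoOn_Ici.monotoneOn hx (by simp; linarith [Nat.lt_floor_add_one x])
    (Nat.lt_floor_add_one x).le

theorem summable_pow_div_factorial_of_le {d : ℕ → ℕ} {α C : ℝ} (hα : 0 < α)
    (hd : ∀ᶠ k in atTop, α * k - C ≤ d k) {r : ℝ} (hr : 0 ≤ r) :
    Summable fun k => r ^ k / (d k)! := by
  set t := max 1 ((2 * r) ^ α⁻¹)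
  have ht : 1 ≤ t := le_max_left _ _
  have ht0 : 0 < t := by positivity
  have hratio : r / t ^ α ≤ 1 / 2 := by
    have : 2 * r ≤ t ^ α := by
      calc 2 * r = ((2 * r) ^ α⁻¹) ^ α := (rpow_inv_rpow (by positivity) hα.ne').symm
        _ ≤ t ^ α := rpow_le_rpow (by positivity) (le_max_right _ _) hα.le
    rw [div_le_iff₀ (by positivity)]; linarith
  refine Summable.of_norm_bounded_eventually_nat
    ((summable_geometric_two).mul_left (exp t * t ^ C)) ?_
  filter_upwards [hd] with k hk
  -- `t ^ d / d! ≤ exp t` with `t ^ α ≥ 2 r` bounds the `k`-th term by `exp t * t ^ C * 2⁻ᵏ`.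
  have hfact : 1 / ((d k)! : ℝ) ≤ exp t / t ^ (α * k - C) := by
    have hexp : 1 / ((d k)! : ℝ) ≤ exp t / t ^ (d k : ℝ) := by
      rw [le_div_iff₀ (by positivity), one_div_mul_eq_div, rpow_natCast]
      exact pow_div_factorial_le_exp t ht0.le _
    exact hexp.trans (div_le_div_of_nonneg_left (exp_pos t).le (by positivity)
      (rpow_le_rpow_of_exponent_le ht hk))
  have hsplit : t ^ (α * k - C) = (t ^ α) ^ k / t ^ C := by
    rw [rpow_sub ht0, ← rpow_natCast, ← rpow_mul ht0.le, mul_comm]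
  calc ‖r ^ k / (d k)!‖ = r ^ k * (1 / (d k)!) := by
        rw [Real.norm_of_nonneg (by positivity)]; ring
    _ ≤ r ^ k * (exp t / t ^ (α * k - C)) := by gcongr
    _ = exp t * t ^ C * (r / t ^ α) ^ k := by
        rw [hsplit, div_pow]; field_simp
    _ ≤ exp t * t ^ C * (1 / 2) ^ k := by
        have : 0 ≤ r / t ^ α := by positivity
        exact mul_le_mul_of_nonneg_left (pow_le_pow_left₀ this hratio k) (by positivity)

theorem eventually_le_mul_natCast_add {a : ℝ} (ha : 0 < a) (b c : ℝ) :
    ∀ᶠ k : ℕ in atTop, c ≤ a * k + b :=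
  (tendsto_atTop_add_const_right _ b
    (tendsto_natCast_atTop_atTop.const_mul_atTop ha)).eventually_ge_atTop c

theorem Real.exists_eventually_inv_abs_Gamma_mul_add_le {ρ : ℝ} (hρ : 0 ≤ ρ) (β : ℝ) :
    ∃ C, ∀ᶠ k : ℕ in atTop, |Gamma (ρ * k + β)|⁻¹ ≤ C := by
  rcases hρ.eq_or_lt with rfl | hρ
  · exact ⟨|Gamma β|⁻¹, .of_forall fun k => by simp⟩
  refine ⟨1, ?_⟩
  filter_upwards [eventually_le_mul_natCast_add hρ β 2] with k hk
  have h1 : 1 ≤ Gamma (ρ * k + β) :=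
    Gamma_two ▸ Gamma_strictMonoOn_Ici.monotoneOn Set.self_mem_Ici hk hk
  rw [abs_of_pos (by linarith)]
  exact inv_le_one_of_one_le₀ h1

theorem Real.eventually_inv_factorial_mul_abs_Gamma_le {ρ : ℝ} (hρ₁ : -1 < ρ) (hρ₀ : ρ < 0)
    (β : ℝ) : ∀ᶠ k : ℕ in atTop,
      ((k ! : ℝ) * |Gamma (ρ * k + β)|)⁻¹ ≤ ((k - ⌊1 - (ρ * k + β)⌋₊)! : ℝ)⁻¹ := by
  filter_upwards [eventually_le_mul_natCast_add (neg_pos.mpr hρ₀) (1 - β) 2,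
    eventually_le_mul_natCast_add (by linarith : 0 < 1 + ρ) (β - 1) 0] with k h2 hk
  set x := 1 - (ρ * k + β)
  have hxk : ⌊x⌋₊ ≤ k := Nat.floor_le_of_le (by linarith)
  have hΓ : |Gamma (ρ * k + β)|⁻¹ ≤ (⌊x⌋₊)! :=
    (inv_abs_Gamma_le_Gamma_one_sub (by linarith)).trans
      (Gamma_le_factorial_floor (by linarith))
  have hfact : ((⌊x⌋₊)! : ℝ) * (k - ⌊x⌋₊)! ≤ k ! := by
    exact_mod_cast Nat.le_of_dvd k.factorial_pos (Nat.factorial_mul_factorial_dvd_factorial hxk)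
  calc ((k ! : ℝ) * |Gamma (ρ * k + β)|)⁻¹ = |Gamma (ρ * k + β)|⁻¹ / k ! := by
        rw [mul_inv, inv_mul_eq_div]
    _ ≤ (⌊x⌋₊)! / k ! := by gcongr
    _ ≤ ((k - ⌊x⌋₊)! : ℝ)⁻¹ := by
        rw [div_le_iff₀ (by positivity), inv_mul_eq_div, le_div_iff₀ (by positivity)]
        exact hfact

theorem summable_norm_inv_factorial_mul_Gamma_mul_pow {ρ : ℝ} (hρ : -1 < ρ) (β : ℝ) {r : ℝ}
    (hr : 0 ≤ r) : Summable fun k : ℕ => ‖(k ! * Gamma (ρ * k + β))⁻¹‖ * r ^ k := by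
  simp only [norm_inv, norm_mul, RCLike.norm_natCast, Real.norm_eq_abs]
  rcases le_or_gt 0 ρ with hρ0 | hρ0
  · obtain ⟨C, hC⟩ := exists_eventually_inv_abs_Gamma_mul_add_le hρ0 β
    refine .of_norm_bounded_eventually_nat ((summable_pow_div_factorial r).mul_left C) ?_
    filter_upwards [hC] with k hk
    calc _ = |Gamma (ρ * k + β)|⁻¹ * (r ^ k / k !) := by
          rw [Real.norm_of_nonneg (by positivity)]; ring
      _ ≤ C * (r ^ k / k !) := by gcongr
  · refine .of_norm_bounded_eventually_nat (summable_pow_div_factorial_of_le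
      (d := fun k => k - ⌊1 - (ρ * k + β)⌋₊) (C := 1 - β) (by linarith : 0 < 1 + ρ) ?_ hr) ?_
    · filter_upwards [eventually_le_mul_natCast_add (neg_pos.mpr hρ0) (1 - β) 0,
        eventually_le_mul_natCast_add (by linarith : 0 < 1 + ρ) (β - 1) 0] with k hx hk
      have hxk : ⌊1 - (ρ * k + β)⌋₊ ≤ k := Nat.floor_le_of_le (by linarith)
      rw [Nat.cast_sub hxk]
      linarith [Nat.floor_le (by linarith : 0 ≤ 1 - (ρ * k + β))]
    · filter_upwards [eventually_inv_factorial_mul_abs_Gamma_le hρ hρ0 β] with k hk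
      rw [Real.norm_of_nonneg (by positivity), mul_comm, div_eq_mul_inv]
      gcongr

/-- `∂/∂z W(z,ρ,β) = W(z,ρ,ρ+β)` for all real `z`, `ρ > -1`, `β ∈ ℝ`. -/
theorem wright_hasDerivAt (ρ β : ℝ) (hρ : -1 < ρ) (z : ℝ) :
    HasDerivAt (fun w => wright w ρ β) (wright z ρ (ρ + β)) z := by
  have hseries :
      (fun w => wright w ρ β) = fun w => ∑' k : ℕ, (k ! * Gamma (ρ * k + β))⁻¹ * w ^ k :=
    funext fun w => tsum_congr fun k => div_eq_inv_mul _ _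
  have hcoeff (k : ℕ) : ((k : ℝ) + 1) * ((k + 1)! * Gamma (ρ * ↑(k + 1) + β))⁻¹ =
      (k ! * Gamma (ρ * k + (ρ + β)))⁻¹ := by
    rw [Nat.factorial_succ, Nat.cast_mul, Nat.cast_succ, mul_assoc, mul_inv, ← mul_assoc,
      mul_inv_cancel₀ (by positivity), one_mul]
    ring_nf
  rw [hseries]
  refine (hasDerivAt_tsum_mul_pow
    (fun r hr => summable_norm_inv_factorial_mul_Gamma_mul_pow hρ β hr) z).congr_deriv ?_
  exact tsum_congr fun k => by rw [hcoeff, div_eq_inv_mul]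
end

section
/- For all real x ≥ 0, erfc(x) = W(-2x, -1/2, 1), where erfc(x) = (2/√π) ∫_x^∞ e^{-ξ²} dξ, equivalently erf(x) = 1 − W(-2x, -1/2, 1). -/
open MeasureTheory

/-- The error function `erf(x) = (2/√π) ∫_0^x e^{-ξ²} dξ`. -/
noncomputable def erf (x : ℝ) : ℝ :=
  2 / Real.sqrt Real.pi * ∫ ξ in (0 : ℝ)..x, Real.exp (-ξ ^ 2)

/-- The complementary error function `erfc(x) = (2/√π) ∫_x^∞ e^{-ξ²} dξ`. -/
noncomputable def erfc (x : ℝ) : ℝ :=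
  2 / Real.sqrt Real.pi * ∫ ξ in Set.Ioi x, Real.exp (-ξ ^ 2)

/-!
Write `W(-2x, -1/2, 1) = ∑ₖ (-2x)ᵏ / (k! Γ(1 - k/2))`. The even terms with `k ≥ 2` vanish, since
`1 - k/2` is then a pole of `Γ`. For the odd terms, `Γ(1/2 - m) = (-4)ᵐ m! √π / (2m)!` turns the
`k = 2m + 1` term into `-(2/√π) · x (-x²)ᵐ / (m! (2m + 1))`, which is `-(2/√π)` times the integral
over `[0, x]` of the `m`-th term of the exponential series of `e^{-ξ²}`. Hence `W = 1 - erf x`, and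
`erf x + erfc x = 1` is the Gaussian integral `∫₀^∞ e^{-ξ²} dξ = √π / 2`.
-/

open Real Nat

lemma Real.hasSum_exp (y : ℝ) : HasSum (fun n : ℕ => y ^ n / n !) (exp y) :=
  exp_eq_exp_ℝ ▸ NormedSpace.expSeries_div_hasSum_exp y

lemma integral_neg_sq_pow_div_factorial (x : ℝ) (m : ℕ) :
    ∫ ξ in (0 : ℝ)..x, (-ξ ^ 2) ^ m / m ! = x * (-x ^ 2) ^ m / (m ! * (2 * m + 1)) := by
  have h : (fun ξ : ℝ => (-ξ ^ 2) ^ m / m !) = fun ξ => (-1 : ℝ) ^ m / m ! * ξ ^ (2 * m) := by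
    ext ξ; rw [neg_pow, pow_mul]; ring
  rw [h, intervalIntegral.integral_const_mul, integral_pow, neg_pow (x ^ 2), ← pow_mul]
  field_simp
  push_cast
  ring

lemma hasSum_integral_exp_neg_sq (x : ℝ) :
    HasSum (fun m : ℕ => x * (-x ^ 2) ^ m / (m ! * (2 * m + 1)))
      (∫ ξ in (0 : ℝ)..x, exp (-ξ ^ 2)) := by
  simp_rw [← integral_neg_sq_pow_div_factorial]
  refine intervalIntegral.hasSum_integral_of_dominated_convergence
    (fun m ξ => (ξ ^ 2) ^ m / m !) (fun m => by fun_prop) ?_ ?_ ?_ ?_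
  · exact fun m => ae_of_all _ fun ξ _ => by simp
  · exact ae_of_all _ fun ξ _ => (hasSum_exp _).summable
  · simp_rw [fun ξ : ℝ => (hasSum_exp (ξ ^ 2)).tsum_eq]
    exact (by fun_prop : Continuous fun ξ : ℝ => exp (ξ ^ 2)).intervalIntegrable _ _
  · exact ae_of_all _ fun ξ _ => hasSum_exp _

lemma erf_add_erfc (x : ℝ) : erf x + erfc x = 1 := by
  have hgauss_int : Integrable (fun ξ : ℝ => exp (-ξ ^ 2)) := by
    simpa using integrable_exp_neg_mul_sq one_pos
  have hgauss : ∫ ξ in Set.Ioi (0 : ℝ), exp (-ξ ^ 2) = √π / 2 := by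
    simpa using integral_gaussian_Ioi 1
  rw [erf, erfc, ← mul_add, ← intervalIntegral.integral_Ioi_sub_Ioi' hgauss_int.integrableOn
    hgauss_int.integrableOn, hgauss, sub_add_cancel]
  field_simp

lemma Real.Gamma_one_half_sub_nat (m : ℕ) :
    Gamma (1 / 2 - m) = (-4) ^ m * m ! * √π / (2 * m)! := by
  induction m with
  | zero => simpa using Gamma_one_half_eq
  | succ m ih =>
    have hs : 1 / 2 - ((m + 1 : ℕ) : ℝ) ≠ 0 := by
      push_cast; linarith [(m.cast_nonneg : (0 : ℝ) ≤ m)]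
    have hrec := Gamma_add_one hs
    rw [show 1 / 2 - ((m + 1 : ℕ) : ℝ) + 1 = 1 / 2 - m by push_cast; ring, ih] at hrec
    rw [eq_div_of_mul_eq hs ((mul_comm _ _).trans hrec.symm),
      show 2 * (m + 1) = 2 * m + 1 + 1 by ring, factorial_succ, factorial_succ, factorial_succ,
      div_div, div_eq_div_iff (mul_ne_zero (by positivity) hs) (by positivity)]
    push_cast
    ring

lemma wright_neg_half_one_odd_term (x : ℝ) (m : ℕ) :
    (-(2 * x)) ^ (2 * m + 1) / ((2 * m + 1)! * Gamma (-(1 / 2) * (2 * m + 1 : ℕ) + 1)) =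
      -(2 / √π) * (x * (-x ^ 2) ^ m / (m ! * (2 * m + 1))) := by
  rw [show -(1 / 2) * ((2 * m + 1 : ℕ) : ℝ) + 1 = 1 / 2 - m by push_cast; ring,
    Gamma_one_half_sub_nat, factorial_succ, pow_succ, pow_mul,
    show (-(2 * x)) ^ 2 = -4 * -x ^ 2 by ring, mul_pow]
  push_cast
  field_simp

lemma hasSum_wright_neg_half_one (x : ℝ) :
    HasSum (fun k : ℕ => (-(2 * x)) ^ k / (k ! * Gamma (-(1 / 2) * k + 1))) (1 - erf x) := by
  rw [sub_eq_add_neg]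
  refine HasSum.even_add_odd ?_ ?_
  · -- Mathlib's `Gamma` vanishes at its poles, which is the convention `1 / Γ = 0` of the series
    convert hasSum_single 0 fun m hm => ?_ using 1
    · simp
    · obtain ⟨n, rfl⟩ := exists_eq_succ_of_ne_zero hm
      rw [show -(1 / 2) * ((2 * (n + 1) : ℕ) : ℝ) + 1 = -n by push_cast; ring,
        Gamma_neg_nat_eq_zero, mul_zero, div_zero]
  · simp_rw [wright_neg_half_one_odd_term]
    rw [erf, ← neg_mul]
    exact (hasSum_integral_exp_neg_sq x).mul_left _

theorem erfc_eq_wright_general (x : ℝ) :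
    erfc x = wright (-(2 * x)) (-(1 / 2)) 1 ∧
      erf x = 1 - wright (-(2 * x)) (-(1 / 2)) 1 := by
  have hW : wright (-(2 * x)) (-(1 / 2)) 1 = 1 - erf x :=
    (hasSum_wright_neg_half_one x).tsum_eq
  rw [hW, ← erf_add_erfc x]
  constructor <;> ring

/-- For `x ≥ 0`, `erfc(x) = W(-2x, -1/2, 1)`, equivalently
`erf(x) = 1 - W(-2x, -1/2, 1)`. -/
theorem erfc_eq_wright (x : ℝ) (hx : 0 ≤ x) :
    erfc x = wright (-(2 * x)) (-(1 / 2)) 1 ∧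
      erf x = 1 - wright (-(2 * x)) (-(1 / 2)) 1 :=
  erfc_eq_wright_general x
end

section
/- For every fixed x ≥ 0, lim_{α→1⁻} M_{α/2}(2x) = e^{-x²}/√π, where M_ρ denotes the Mainardi function. -/
open Filter

/-- The Mainardi function `M_ρ(z) = W(-z, -ρ, 1-ρ)`. -/
noncomputable def mainardi (ρ z : ℝ) : ℝ := wright (-z) (-ρ) (1 - ρ)

/-!
The `k`-th term of `M_ρ(z)` is `(-z)^k / (k! Γ(s))` with `1 - s = ρ(k+1)`. The reflection formula
gives `|1/Γ(s)| ≤ Γ(1 - s)/π`, and for `ρ ∈ [a, 1/2]` convexity of `Γ` on `[a, ⌊k/2⌋ + 1]` bounds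
`Γ(ρ(k+1))` by `Γ(a) + ⌊k/2⌋!`. As `⌊k/2⌋!² ≤ k!`, this dominates the series uniformly in `ρ`, so
`ρ ↦ M_ρ(z)` is continuous on `[a, 1/2]`. At `ρ = 1/2` the odd terms vanish at the poles of `Γ`
and the even ones sum to `e^{-z²/4}/√π`.
-/

open Set Nat

theorem Nat.factorial_div_two_mul_self_le (k : ℕ) : (k / 2)! * (k / 2)! ≤ k ! := by
  have hdvd := factorial_mul_factorial_dvd_factorial (Nat.div_le_self k 2)
  calc (k / 2)! * (k / 2)! ≤ (k / 2)! * (k - k / 2)! :=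
        Nat.mul_le_mul_left _ (factorial_le (by omega))
    _ ≤ k ! := Nat.le_of_dvd (factorial_pos k) hdvd

namespace Real

theorem continuous_inv_Gamma : Continuous fun s : ℝ => (Gamma s)⁻¹ := by
  have h (s : ℝ) : (Gamma s)⁻¹ = ((Complex.Gamma s)⁻¹).re := by
    rw [Complex.Gamma_ofReal, ← Complex.ofReal_inv, Complex.ofReal_re]
  rw [funext h]
  exact Complex.continuous_re.comp
    (Complex.differentiable_one_div_Gamma.continuous.comp Complex.continuous_ofReal)

theorem abs_Gamma_inv_le {s : ℝ} (hs : s < 1) : |Gamma s|⁻¹ ≤ Gamma (1 - s) / π := by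
  rcases eq_or_ne (Gamma s) 0 with h0 | h0
  · rw [h0, abs_zero, inv_zero]
    exact div_nonneg (Gamma_pos_of_pos (by linarith)).le pi_pos.le
  have hΓ : 0 < Gamma (1 - s) := Gamma_pos_of_pos (by linarith)
  have hrefl := Gamma_mul_Gamma_one_sub s
  have hsin : sin (π * s) ≠ 0 := fun h ↦ by
    rw [h, div_zero] at hrefl
    exact mul_ne_zero h0 hΓ.ne' hrefl
  -- Euler's reflection formula: `|Γ(s)| Γ(1-s) = π / |sin(π s)| ≥ π`.
  have hπ : π ≤ |Gamma s| * Gamma (1 - s) := by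
    rw [← abs_of_pos hΓ, ← abs_mul, hrefl, abs_div, abs_of_pos pi_pos]
    exact le_div_self pi_pos.le (abs_pos.2 hsin) (abs_sin_le_one _)
  rwa [inv_le_iff_one_le_mul₀ (abs_pos.2 h0), div_mul_eq_mul_div, one_le_div pi_pos, mul_comm]

theorem Gamma_le_max_of_mem_Icc {a b y : ℝ} (ha : 0 < a) (hy : y ∈ Icc a b) :
    Gamma y ≤ max (Gamma a) (Gamma b) :=
  convexOn_Gamma.le_on_segment ha (ha.trans_le (hy.1.trans hy.2))
    (by rwa [segment_eq_Icc (hy.1.trans hy.2)])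

theorem Gamma_one_half_sub_nat_mul_factorial (m : ℕ) :
    Gamma (1 / 2 - m) * (2 * m)! = √π * (-4) ^ m * m ! := by
  induction m with
  | zero => simpa using Gamma_one_half_eq
  | succ m ih =>
    have hne : (1 : ℝ) / 2 - (m + 1) ≠ 0 := by
      have : (0 : ℝ) ≤ m := m.cast_nonneg
      intro h; linarith
    have hrec := Gamma_add_one hne
    rw [show (1 / 2 - ((m : ℝ) + 1)) + 1 = 1 / 2 - m by ring] at hrec
    rw [show 2 * (m + 1) = 2 * m + 1 + 1 by ring]
    push_cast [factorial_succ]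
    linear_combination (2 * (2 * (m : ℝ) + 2) * (2 * m)!) * hrec - 4 * ((m : ℝ) + 1) * ih

theorem summable_pow_div_factorial_div_two (r : ℝ) :
    Summable fun k : ℕ => r ^ k / (k / 2)! := by
  apply Summable.even_add_odd
  · simpa [pow_mul] using summable_pow_div_factorial (r ^ 2)
  · refine ((summable_pow_div_factorial (r ^ 2)).mul_left r).congr fun m ↦ ?_
    rw [show (2 * m + 1) / 2 = m by omega, pow_succ r (2 * m), pow_mul, mul_div_assoc', mul_comm]

theorem summable_pow_mul_factorial_div_two_div_factorial (r : ℝ) :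
    Summable fun k : ℕ => r ^ k * (k / 2)! / k ! := by
  refine (summable_pow_div_factorial_div_two |r|).of_norm_bounded fun k ↦ ?_
  have hpos : (0 : ℝ) < (k / 2)! := by positivity
  rw [norm_div, norm_mul, norm_pow, Real.norm_eq_abs, Real.norm_natCast, Real.norm_natCast,
    div_le_div_iff₀ (by positivity) hpos, mul_assoc]
  gcongr
  exact_mod_cast Nat.factorial_div_two_mul_self_le k

end Real

open Real

noncomputable def mainardiTerm (ρ z : ℝ) (k : ℕ) : ℝ :=
  (-z) ^ k / (k ! * Gamma (-ρ * k + (1 - ρ)))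

theorem mainardi_eq_tsum (ρ z : ℝ) : mainardi ρ z = ∑' k, mainardiTerm ρ z k := rfl

theorem abs_mainardiTerm_le {a ρ : ℝ} (ha : 0 < a) (hρ : ρ ∈ Icc a (1 / 2)) (z : ℝ) (k : ℕ) :
    |mainardiTerm ρ z k| ≤ (Gamma a * (|z| ^ k / k !) + |z| ^ k * (k / 2)! / k !) / π := by
  set s := -ρ * k + (1 - ρ)
  have hk : (k : ℝ) + 1 ≤ 2 * ((k / 2 : ℕ) : ℝ) + 2 := by
    norm_cast; omega
  have hs : 1 - s ∈ Icc a ((k / 2 : ℕ) + 1) := by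
    have : (0 : ℝ) ≤ k := k.cast_nonneg
    constructor <;> nlinarith [hρ.1, hρ.2]
  have hΓ : Gamma (1 - s) ≤ Gamma a + (k / 2)! := by
    refine (Gamma_le_max_of_mem_Icc ha hs).trans (max_le ?_ ?_)
    · linarith [factorial_pos (k / 2)]
    · rw [Gamma_nat_eq_factorial]; linarith [Gamma_pos_of_pos ha]
  have hs1 : s < 1 := by linarith [hs.1]
  calc |mainardiTerm ρ z k| = |z| ^ k / k ! * |Gamma s|⁻¹ := by
        rw [mainardiTerm, abs_div, abs_mul, abs_pow, abs_neg, Nat.abs_cast, ← div_div,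
          div_eq_mul_inv]
    _ ≤ |z| ^ k / k ! * ((Gamma a + (k / 2)!) / π) := by
        gcongr
        exact (abs_Gamma_inv_le hs1).trans (by gcongr)
    _ = _ := by ring

theorem continuousOn_mainardi (z : ℝ) {a : ℝ} (ha : 0 < a) :
    ContinuousOn (fun ρ ↦ mainardi ρ z) (Icc a (1 / 2)) := by
  have hterm (k : ℕ) : Continuous fun ρ ↦ mainardiTerm ρ z k := by
    simp only [mainardiTerm, div_eq_mul_inv, mul_inv]
    exact continuous_const.mul (continuous_const.mul
      (continuous_inv_Gamma.comp (by fun_prop)))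
  have hbound : Summable fun k : ℕ ↦
      (Gamma a * (|z| ^ k / k !) + |z| ^ k * (k / 2)! / k !) / π :=
    (((summable_pow_div_factorial |z|).mul_left _).add
      (summable_pow_mul_factorial_div_two_div_factorial |z|)).div_const π
  simp only [mainardi_eq_tsum]
  exact continuousOn_tsum (fun k ↦ (hterm k).continuousOn) hbound
    fun k ρ hρ ↦ abs_mainardiTerm_le ha hρ z k

theorem mainardi_one_half_two_mul (x : ℝ) : mainardi (1 / 2) (2 * x) = exp (-x ^ 2) / √π := by
  have hodd (m : ℕ) : mainardiTerm (1 / 2) (2 * x) (2 * m + 1) = 0 := by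
    rw [mainardiTerm, show -(1 / 2 : ℝ) * ↑(2 * m + 1) + (1 - 1 / 2) = -m by push_cast; ring,
      Gamma_neg_nat_eq_zero, mul_zero, div_zero]
  have heven (m : ℕ) : mainardiTerm (1 / 2) (2 * x) (2 * m) = (-x ^ 2) ^ m / m ! / √π := by
    rw [mainardiTerm, show -(1 / 2 : ℝ) * ↑(2 * m) + (1 - 1 / 2) = 1 / 2 - m by push_cast; ring,
      mul_comm ((2 * m)! : ℝ), Gamma_one_half_sub_nat_mul_factorial, pow_mul,
      show (-(2 * x)) ^ 2 = -4 * -x ^ 2 by ring, mul_pow]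
    field_simp
  have hexp : HasSum (fun m : ℕ ↦ (-x ^ 2) ^ m / m !) (exp (-x ^ 2)) := by
    rw [exp_eq_exp_ℝ]
    exact NormedSpace.expSeries_div_hasSum_exp (-x ^ 2)
  have h := HasSum.even_add_odd (f := mainardiTerm (1 / 2) (2 * x))
    (by simpa only [heven] using hexp.div_const √π) (by simpa only [hodd] using hasSum_zero)
  rw [add_zero] at h
  rw [mainardi_eq_tsum, h.tsum_eq]

theorem mainardi_tendsto_gaussian_general (x : ℝ) :
    Tendsto (fun α : ℝ => mainardi (α / 2) (2 * x)) (nhdsWithin 1 (Set.Iio 1))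
      (nhds (Real.exp (-x ^ 2) / Real.sqrt Real.pi)) := by
  have hcont : ContinuousWithinAt (fun ρ ↦ mainardi ρ (2 * x)) (Icc (1 / 4) (1 / 2)) (1 / 2) :=
    continuousOn_mainardi (2 * x) (by norm_num) _ (by norm_num)
  have hhalf : Tendsto (fun α : ℝ ↦ α / 2) (nhdsWithin 1 (Iio 1))
      (nhdsWithin (1 / 2) (Icc (1 / 4) (1 / 2))) := by
    refine tendsto_nhdsWithin_iff.2 ⟨?_, ?_⟩
    · exact tendsto_nhdsWithin_of_tendsto_nhds
        ((continuous_id.div_const 2).tendsto' 1 (1 / 2) (by norm_num))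
    · filter_upwards [Ioo_mem_nhdsLT (show (1 / 2 : ℝ) < 1 by norm_num)] with α hα
      constructor <;> linarith [hα.1, hα.2]
  rw [← mainardi_one_half_two_mul]
  exact hcont.tendsto.comp hhalf

/-- For fixed `x ≥ 0`, `M_{α/2}(2x) → e^{-x²}/√π` as `α → 1⁻`. -/
theorem mainardi_tendsto_gaussian (x : ℝ) (hx : 0 ≤ x) :
    Tendsto (fun α : ℝ => mainardi (α / 2) (2 * x)) (nhdsWithin 1 (Set.Iio 1))
      (nhds (Real.exp (-x ^ 2) / Real.sqrt Real.pi)) :=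
  mainardi_tendsto_gaussian_general x
end
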